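/- Let E be a Polish space with a σ-finite Borel measure μ, let (T_t)_{t≥0} be a strongly continuous semigroup of bounded linear operators on L^1(E,μ) with generator L (where D(L) = { u ∈ L^1 : lim_{t→0^+} (T_t u − u)/t exists in L^1-norm } and L u is that limit). Then the generator of the adjoint semigroup (T_t^*)_{t≥0} on (L^∞(E,μ), C(L^∞,L^1)) is the adjoint operator L^*; precisely, for F ∈ L^∞(E,μ) the following are equivalent: (i) there exists G ∈ L^∞(E,μ) such that ∫_E F (L u) dμ = ∫_E G u dμ for all u ∈ D(L); (ii) the limit lim_{t→0^+} (T_t^* F − F)/t exists in the topology C(L^∞,L^1); and in that case the limit in (ii) equals the function G in (i). -/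

import Mathlib

/-!
Write `⟨F, u⟩ = ∫ F u dμ` for the continuous pairing of `L^∞` with `L^1`.

(ii) ⇒ (i): testing the convergence on the compact set `{u}` gives
`⟨(S_t F - F)/t, u⟩ → ⟨G, u⟩`, while `⟨(S_t F - F)/t, u⟩ = ⟨F, (T_t u - u)/t⟩ → ⟨F, L u⟩`.

(i) ⇒ (ii): `v_t = ∫₀ᵗ T_s u ds` lies in `D(L)` with `L v_t = T_t u - u`, hence
`⟨(S_t F - F)/t - G, u⟩ = ⟨G, v_t/t - u⟩`, which is bounded by `‖G‖ sup_{s ≤ t} ‖T_s u - u‖`.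
By Banach–Steinhaus the `T_s`, `s ∈ [0, 1]`, are uniformly bounded, so `T_s u → u` uniformly
for `u` in a compact set.
-/

open MeasureTheory Filter Topology Set

/-- The seminorm `p_K(F) = sup_{g ∈ K} |∫ F g dμ|` generating the topology
`C(L^∞, L^1)` of uniform convergence on (norm-compact) subsets `K` of `L^1`. -/
noncomputable def pK {α : Type*} [MeasurableSpace α] (μ : Measure α)
    (K : Set (Lp ℝ 1 μ)) (F : Lp ℝ ⊤ μ) : ℝ :=
  ⨆ g ∈ K, |∫ x, F x * g x ∂μ|

section UniformBoundedness

variable {α 𝕜 X Y : Type*} [NontriviallyNormedField 𝕜]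
  [NormedAddCommGroup X] [NormedSpace 𝕜 X] [NormedAddCommGroup Y] [NormedSpace 𝕜 Y]

theorem exists_opNorm_le_of_continuousOn [TopologicalSpace α] [CompleteSpace X]
    {A : α → X →L[𝕜] Y} {s : Set α} (hs : IsCompact s)
    (hA : ∀ x, ContinuousOn (fun a => A a x) s) : ∃ M, ∀ a ∈ s, ‖A a‖ ≤ M := by
  obtain ⟨M, hM⟩ := banach_steinhaus (g := fun a : s => A a) fun x =>
    (hs.exists_bound_of_continuousOn (hA x)).imp fun _ hC a => hC a a.2
  exact ⟨M, fun a ha => hM ⟨a, ha⟩⟩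

theorem tendstoUniformlyOn_zero_of_norm_le {l : Filter α} {A : α → X →L[𝕜] Y} {M : ℝ}
    (hM : ∀ᶠ a in l, ‖A a‖ ≤ M) (hA : ∀ x, Tendsto (fun a => A a x) l (𝓝 0))
    {K : Set X} (hK : IsCompact K) : TendstoUniformlyOn (fun a x => A a x) 0 l K := by
  rw [Metric.tendstoUniformlyOn_iff]
  intro ε hε
  set r := ε / (2 * (|M| + 1)) with hr
  have hr0 : 0 < r := by positivity
  obtain ⟨N, hNfin, hKN⟩ := Metric.totallyBounded_iff.mp hK.totallyBounded r hr0
  have hN : ∀ᶠ a in l, ∀ y ∈ N, ‖A a y‖ < ε / 2 := (eventually_all_finite hNfin).2 fun y _ =>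
    (tendsto_norm_zero.comp (hA y)).eventually_lt_const (half_pos hε)
  filter_upwards [hM, hN] with a haM haN x hx
  obtain ⟨y, hyN, hxy⟩ := mem_iUnion₂.mp (hKN hx)
  rw [Metric.mem_ball, dist_eq_norm] at hxy
  have hAr : ‖A a‖ * ‖x - y‖ < ε / 2 :=
    calc ‖A a‖ * ‖x - y‖ ≤ |M| * r := by gcongr; exact haM.trans (le_abs_self M)
      _ < (|M| + 1) * r := by gcongr; linarith
      _ = ε / 2 := by rw [hr]; field_simp
  calc dist ((0 : X → Y) x) (A a x) = ‖A a (x - y) + A a y‖ := by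
        rw [← map_add, sub_add_cancel, Pi.zero_apply, dist_zero_left]
    _ ≤ ‖A a‖ * ‖x - y‖ + ‖A a y‖ := (norm_add_le _ _).trans (by gcongr; exact (A a).le_opNorm _)
    _ < ε := by linarith [haN y hyN]

end UniformBoundedness

section Semigroup

variable {X : Type*} [NormedAddCommGroup X] [NormedSpace ℝ X] {T : ℝ → X →L[ℝ] X}

structure IsStronglyContinuousSemigroup (T : ℝ → X →L[ℝ] X) : Prop where
  zero_apply : ∀ u, T 0 u = u
  add_apply : ∀ s, 0 ≤ s → ∀ t, 0 ≤ t → ∀ u, T (s + t) u = T s (T t u)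
  continuousOn : ∀ u, ContinuousOn (fun t => T t u) (Ici 0)

theorem tendstoUniformlyOn_apply_sub_self [CompleteSpace X] (hT0 : ∀ u, T 0 u = u)
    (hTcont : ∀ u, ContinuousOn (fun t => T t u) (Ici 0)) {K : Set X} (hK : IsCompact K) :
    TendstoUniformlyOn (fun t u => T t u - u) 0 (𝓝[≥] 0) K := by
  obtain ⟨M, hM⟩ := exists_opNorm_le_of_continuousOn (isCompact_Icc (a := (0 : ℝ)) (b := 1))
    fun u => (hTcont u).mono Icc_subset_Ici_self
  have hbound : ∀ᶠ t in 𝓝[≥] (0 : ℝ), ‖T t - ContinuousLinearMap.id ℝ X‖ ≤ M + 1 := by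
    filter_upwards [Icc_mem_nhdsGE zero_lt_one] with t ht
    exact (norm_sub_le _ _).trans (add_le_add (hM t ht) ContinuousLinearMap.norm_id_le)
  refine tendstoUniformlyOn_zero_of_norm_le hbound (fun u => ?_) hK
  have h := (hTcont u).continuousWithinAt self_mem_Ici
  rw [ContinuousWithinAt, hT0] at h
  simpa using h.sub_const u

-- Extended constantly to `s < 0`, so that the fundamental theorem of calculus applies on `ℝ`.
noncomputable def semigroupOrbit (T : ℝ → X →L[ℝ] X) (u : X) (s : ℝ) : X := T (max s 0) u

theorem semigroupOrbit_of_nonneg (u : X) {s : ℝ} (hs : 0 ≤ s) :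
    semigroupOrbit T u s = T s u := by
  rw [semigroupOrbit, max_eq_left hs]

theorem continuous_semigroupOrbit (hTcont : ∀ u, ContinuousOn (fun t => T t u) (Ici 0))
    (u : X) : Continuous (semigroupOrbit T u) :=
  (hTcont u).comp_continuous (continuous_id.max continuous_const) fun _ =>
    mem_Ici.2 (le_max_right _ _)

variable [CompleteSpace X]

theorem IsStronglyContinuousSemigroup.apply_integral_orbit
    (hT : IsStronglyContinuousSemigroup T) (u : X) {h t : ℝ} (hh : 0 ≤ h) (ht : 0 ≤ t) :
    T h (∫ s in 0..t, semigroupOrbit T u s) = ∫ s in h..h + t, semigroupOrbit T u s := by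
  rw [← (T h).intervalIntegral_comp_comm
    ((continuous_semigroupOrbit hT.continuousOn u).intervalIntegrable 0 t)]
  have hshift := intervalIntegral.integral_comp_add_left (semigroupOrbit T u) h (a := 0) (b := t)
  rw [add_zero] at hshift
  rw [← hshift]
  refine intervalIntegral.integral_congr fun s hs => ?_
  rw [uIcc_of_le ht] at hs
  simp only [semigroupOrbit_of_nonneg u hs.1, semigroupOrbit_of_nonneg u (add_nonneg hh hs.1),
    hT.add_apply h hh s hs.1]

theorem IsStronglyContinuousSemigroup.tendsto_generator_integral_orbit
    (hT : IsStronglyContinuousSemigroup T) (u : X) {t : ℝ} (ht : 0 ≤ t) :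
    Tendsto (fun h : ℝ => h⁻¹ • (T h (∫ s in 0..t, semigroupOrbit T u s) -
      ∫ s in 0..t, semigroupOrbit T u s)) (𝓝[>] 0) (𝓝 (T t u - u)) := by
  set Φ := fun r => ∫ s in 0..r, semigroupOrbit T u s
  have hΦ : ∀ r, HasDerivAt Φ (semigroupOrbit T u r) r := fun r =>
    ((continuous_semigroupOrbit hT.continuousOn u).integral_hasStrictDerivAt 0 r).hasDerivAt
  have hlim := (hΦ t).tendsto_slope_zero_right.sub (hΦ 0).tendsto_slope_zero_right
  rw [semigroupOrbit_of_nonneg u ht, semigroupOrbit_of_nonneg u le_rfl, hT.zero_apply] at hlim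
  refine hlim.congr' ?_
  filter_upwards [self_mem_nhdsWithin] with h hh
  have hshift : T h (Φ t) = Φ (t + h) - Φ (0 + h) := by
    rw [hT.apply_integral_orbit u (le_of_lt hh) ht, zero_add, add_comm t,
      intervalIntegral.integral_interval_sub_left]
    all_goals exact (continuous_semigroupOrbit hT.continuousOn u).intervalIntegrable _ _
  have hΦ0 : Φ 0 = 0 := intervalIntegral.integral_same
  rw [hshift, hΦ0, ← smul_sub]
  congr 1
  abel

theorem norm_integral_orbit_sub_smul_le (hTcont : ∀ u, ContinuousOn (fun t => T t u) (Ici 0))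
    (u : X) {t ε : ℝ} (ht : 0 ≤ t) (hε : ∀ s ∈ Ioc 0 t, ‖T s u - u‖ ≤ ε) :
    ‖(∫ s in 0..t, semigroupOrbit T u s) - t • u‖ ≤ ε * t := by
  have hsub : (∫ s in 0..t, semigroupOrbit T u s) - t • u =
      ∫ s in 0..t, (semigroupOrbit T u s - u) := by
    rw [intervalIntegral.integral_sub ((continuous_semigroupOrbit hTcont u).intervalIntegrable 0 t)
      intervalIntegrable_const, intervalIntegral.integral_const, sub_zero]
  have hbound := intervalIntegral.norm_integral_le_of_norm_le_const (a := 0) (b := t) (C := ε)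
    (f := fun s => semigroupOrbit T u s - u) fun s hs => by
      rw [uIoc_of_le ht] at hs
      rw [semigroupOrbit_of_nonneg u hs.1.le]
      exact hε s hs
  rwa [sub_zero, abs_of_nonneg ht, ← hsub] at hbound

end Semigroup

section AdjointSemigroup

variable {E : Type*} [MeasurableSpace E] {μ : Measure E}

noncomputable def integralPairing (μ : Measure E) : Lp ℝ ⊤ μ →L[ℝ] Lp ℝ 1 μ →L[ℝ] ℝ :=
  (ContinuousLinearMap.mul ℝ ℝ).lpPairing μ ⊤ 1

theorem integralPairing_apply (F : Lp ℝ ⊤ μ) (u : Lp ℝ 1 μ) :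
    integralPairing μ F u = ∫ x, F x * u x ∂μ :=
  ContinuousLinearMap.lpPairing_eq_integral _ F u

theorem pK_nonneg (K : Set (Lp ℝ 1 μ)) (F : Lp ℝ ⊤ μ) : 0 ≤ pK μ K F :=
  Real.iSup_nonneg fun _ => Real.iSup_nonneg fun _ => abs_nonneg _

-- `hC` accounts for the junk value `⨆ _ : False, _ = 0` of empty suprema in `ℝ`.
theorem pK_le {K : Set (Lp ℝ 1 μ)} {F : Lp ℝ ⊤ μ} {C : ℝ} (hC : 0 ≤ C)
    (h : ∀ g ∈ K, |∫ x, F x * g x ∂μ| ≤ C) : pK μ K F ≤ C :=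
  Real.iSup_le (fun g => Real.iSup_le (h g) hC) hC

theorem abs_integral_mul_le_pK {K : Set (Lp ℝ 1 μ)} (hK : IsCompact K) {g : Lp ℝ 1 μ}
    (hg : g ∈ K) (F : Lp ℝ ⊤ μ) : |∫ x, F x * g x ∂μ| ≤ pK μ K F := by
  have hbdd : BddAbove ((fun g => |integralPairing μ F g|) '' K) :=
    (hK.image (continuous_abs.comp (integralPairing μ F).continuous)).bddAbove
  refine le_ciSup₂ (f := fun g (_ : g ∈ K) => |∫ x, F x * g x ∂μ|) (hbdd.mono ?_) g hg
  rintro _ ⟨-, ⟨g, rfl⟩, ⟨hg, rfl⟩⟩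
  exact ⟨g, hg, congrArg abs (integralPairing_apply F g)⟩

variable {T : ℝ → Lp ℝ 1 μ →L[ℝ] Lp ℝ 1 μ} {S : ℝ → Lp ℝ ⊤ μ →ₗ[ℝ] Lp ℝ ⊤ μ}

theorem integralPairing_adjoint_difference_quotient
    (hS : ∀ t, 0 ≤ t → ∀ (F : Lp ℝ ⊤ μ) (u : Lp ℝ 1 μ),
      ∫ x, (S t F) x * u x ∂μ = ∫ x, F x * (T t u) x ∂μ)
    {t : ℝ} (ht : 0 ≤ t) (F : Lp ℝ ⊤ μ) (u : Lp ℝ 1 μ) :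
    integralPairing μ (t⁻¹ • (S t F - F)) u = integralPairing μ F (t⁻¹ • (T t u - u)) := by
  have hSt : integralPairing μ (S t F) u = integralPairing μ F (T t u) := by
    simp only [integralPairing_apply, hS t ht]
  simp only [map_smul, map_sub, smul_apply, sub_apply, hSt]

theorem integral_mul_generator_eq_of_tendsto_pK
    (hS : ∀ t, 0 ≤ t → ∀ (F : Lp ℝ ⊤ μ) (u : Lp ℝ 1 μ),
      ∫ x, (S t F) x * u x ∂μ = ∫ x, F x * (T t u) x ∂μ)
    {F G : Lp ℝ ⊤ μ} (hG : ∀ K : Set (Lp ℝ 1 μ), IsCompact K →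
      Tendsto (fun t : ℝ => pK μ K (t⁻¹ • (S t F - F) - G)) (𝓝[>] 0) (𝓝 0))
    {u v : Lp ℝ 1 μ} (huv : Tendsto (fun t : ℝ => ‖t⁻¹ • (T t u - u) - v‖) (𝓝[>] 0) (𝓝 0)) :
    ∫ x, F x * v x ∂μ = ∫ x, G x * u x ∂μ := by
  have hF : Tendsto (fun t : ℝ => integralPairing μ F (t⁻¹ • (T t u - u))) (𝓝[>] 0)
      (𝓝 (integralPairing μ F v)) :=
    ((integralPairing μ F).continuous.tendsto v).comp (tendsto_iff_norm_sub_tendsto_zero.2 huv)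
  have hG' : Tendsto (fun t : ℝ => integralPairing μ F (t⁻¹ • (T t u - u))) (𝓝[>] 0)
      (𝓝 (integralPairing μ G u)) := by
    rw [tendsto_iff_norm_sub_tendsto_zero]
    refine squeeze_zero' (.of_forall fun _ => norm_nonneg _) ?_ (hG {u} isCompact_singleton)
    filter_upwards [self_mem_nhdsWithin] with t (ht : 0 < t)
    rw [← integralPairing_adjoint_difference_quotient hS ht.le, ← sub_apply, ← map_sub,
      integralPairing_apply, Real.norm_eq_abs]
    exact abs_integral_mul_le_pK isCompact_singleton rfl _
  rw [← integralPairing_apply, ← integralPairing_apply]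
  exact tendsto_nhds_unique hF hG'

theorem abs_integral_mul_adjoint_difference_quotient_sub_le
    (hT : IsStronglyContinuousSemigroup T)
    (hS : ∀ t, 0 ≤ t → ∀ (F : Lp ℝ ⊤ μ) (u : Lp ℝ 1 μ),
      ∫ x, (S t F) x * u x ∂μ = ∫ x, F x * (T t u) x ∂μ)
    {F G : Lp ℝ ⊤ μ} (hG : ∀ u v : Lp ℝ 1 μ,
      Tendsto (fun t : ℝ => ‖t⁻¹ • (T t u - u) - v‖) (𝓝[>] 0) (𝓝 0) →
        ∫ x, F x * v x ∂μ = ∫ x, G x * u x ∂μ)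
    {t : ℝ} (ht : 0 < t) (u : Lp ℝ 1 μ) {ε : ℝ} (hε : ∀ s ∈ Ioc 0 t, ‖T s u - u‖ ≤ ε) :
    |∫ x, (t⁻¹ • (S t F - F) - G) x * u x ∂μ| ≤ ‖integralPairing μ‖ * ‖G‖ * ε := by
  set P := integralPairing μ
  set v := ∫ s in 0..t, semigroupOrbit T u s
  -- `v` lies in the domain of the generator, with image `T t u - u`
  have hLv : P F (T t u - u) = P G v := by
    simp only [P, integralPairing_apply]
    exact hG v _ (tendsto_iff_norm_sub_tendsto_zero.1
      (hT.tendsto_generator_integral_orbit u ht.le))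
  have hquot : P (t⁻¹ • (S t F - F) - G) u = t⁻¹ * P G (v - t • u) := by
    rw [map_sub, sub_apply, integralPairing_adjoint_difference_quotient hS ht.le, map_smul, hLv,
      map_sub, map_smul, smul_eq_mul, smul_eq_mul]
    field_simp
  rw [← integralPairing_apply, hquot, abs_mul, abs_of_pos (inv_pos.2 ht)]
  calc t⁻¹ * |P G (v - t • u)| ≤ t⁻¹ * (‖P‖ * ‖G‖ * (ε * t)) := by
        gcongr
        exact (P.le_opNorm₂ G _).trans
          (by gcongr; exact norm_integral_orbit_sub_smul_le hT.continuousOn u ht.le hε)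
    _ = ‖P‖ * ‖G‖ * ε := by field_simp

theorem tendsto_pK_of_integral_mul_generator_eq (hT : IsStronglyContinuousSemigroup T)
    (hS : ∀ t, 0 ≤ t → ∀ (F : Lp ℝ ⊤ μ) (u : Lp ℝ 1 μ),
      ∫ x, (S t F) x * u x ∂μ = ∫ x, F x * (T t u) x ∂μ)
    {F G : Lp ℝ ⊤ μ} (hG : ∀ u v : Lp ℝ 1 μ,
      Tendsto (fun t : ℝ => ‖t⁻¹ • (T t u - u) - v‖) (𝓝[>] 0) (𝓝 0) →
        ∫ x, F x * v x ∂μ = ∫ x, G x * u x ∂μ)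
    {K : Set (Lp ℝ 1 μ)} (hK : IsCompact K) :
    Tendsto (fun t : ℝ => pK μ K (t⁻¹ • (S t F - F) - G)) (𝓝[>] 0) (𝓝 0) := by
  set C := ‖integralPairing μ‖ * ‖G‖
  rw [Metric.tendsto_nhds]
  intro ε hε
  have hsmall : ∀ᶠ s in 𝓝[≥] 0, ∀ u ∈ K, ‖T s u - u‖ < ε / (C + 1) := by
    have hunif := tendstoUniformlyOn_apply_sub_self hT.zero_apply hT.continuousOn hK
    filter_upwards [Metric.tendstoUniformlyOn_iff.1 hunif (ε / (C + 1)) (by positivity)]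
      with s hs u hu
    simpa only [Pi.zero_apply, dist_zero_left] using hs u hu
  obtain ⟨δ, hδ, hδsmall⟩ := mem_nhdsGE_iff_exists_Ico_subset.1 hsmall
  filter_upwards [Ioo_mem_nhdsGT hδ] with t ht
  rw [Real.dist_0_eq_abs, abs_of_nonneg (pK_nonneg _ _)]
  calc pK μ K (t⁻¹ • (S t F - F) - G) ≤ C * (ε / (C + 1)) :=
        pK_le (by positivity) fun u hu =>
          abs_integral_mul_adjoint_difference_quotient_sub_le hT hS hG ht.1 u fun s hs =>
            (hδsmall ⟨hs.1.le, hs.2.trans_lt ht.2⟩ u hu).le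
    _ < ε := by
        rw [mul_div_assoc', div_lt_iff₀ (by positivity)]
        nlinarith

end AdjointSemigroup

theorem adjoint_generator_eq_adjoint_of_generator_general
    {E : Type*} [MeasurableSpace E]
    (μ : Measure E)
    (T : ℝ → (Lp ℝ 1 μ →L[ℝ] Lp ℝ 1 μ))
    (hT0 : ∀ u, T 0 u = u)
    (hTsemi : ∀ s, 0 ≤ s → ∀ t, 0 ≤ t → ∀ u, T (s + t) u = T s (T t u))
    (hTcont : ∀ u, ContinuousOn (fun t => T t u) (Set.Ici 0))
    (S : ℝ → (Lp ℝ ⊤ μ →ₗ[ℝ] Lp ℝ ⊤ μ))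
    (hS : ∀ t, 0 ≤ t → ∀ (F : Lp ℝ ⊤ μ) (u : Lp ℝ 1 μ),
      ∫ x, (S t F) x * u x ∂μ = ∫ x, F x * (T t u) x ∂μ)
    (F : Lp ℝ ⊤ μ) :
    -- (i) ⇔ (ii)
    ((∃ G : Lp ℝ ⊤ μ, ∀ u v : Lp ℝ 1 μ,
        Tendsto (fun t : ℝ => ‖t⁻¹ • (T t u - u) - v‖) (nhdsWithin 0 (Set.Ioi 0)) (nhds 0) →
        ∫ x, F x * v x ∂μ = ∫ x, G x * u x ∂μ) ↔
      (∃ G : Lp ℝ ⊤ μ, ∀ K : Set (Lp ℝ 1 μ), IsCompact K →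
        Tendsto (fun t : ℝ => pK μ K (t⁻¹ • (S t F - F) - G))
          (nhdsWithin 0 (Set.Ioi 0)) (nhds 0))) ∧
    -- and in that case the limit in (ii) equals the function `G` of (i)
    (∀ G : Lp ℝ ⊤ μ,
      (∀ u v : Lp ℝ 1 μ,
        Tendsto (fun t : ℝ => ‖t⁻¹ • (T t u - u) - v‖) (nhdsWithin 0 (Set.Ioi 0)) (nhds 0) →
        ∫ x, F x * v x ∂μ = ∫ x, G x * u x ∂μ) →
      (∀ K : Set (Lp ℝ 1 μ), IsCompact K →
        Tendsto (fun t : ℝ => pK μ K (t⁻¹ • (S t F - F) - G))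
          (nhdsWithin 0 (Set.Ioi 0)) (nhds 0))) := by
  have hT : IsStronglyContinuousSemigroup T := ⟨hT0, hTsemi, hTcont⟩
  have hlim := fun G hG K (hK : IsCompact K) =>
    tendsto_pK_of_integral_mul_generator_eq (F := F) (G := G) hT hS hG hK
  refine ⟨⟨fun ⟨G, hG⟩ => ⟨G, hlim G hG⟩, fun ⟨G, hG⟩ => ⟨G, fun u v huv => ?_⟩⟩, hlim⟩
  exact integral_mul_generator_eq_of_tendsto_pK hS hG huv

/-- Let `(T_t)_{t≥0}` be a strongly continuous semigroup on `L^1(E,μ)`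
(`E` Polish, `μ` σ-finite Borel) with generator `L`, and let `(S_t) = (T_t^*)` be the
adjoint family on `L^∞(E,μ)`.  For `F ∈ L^∞` the following are equivalent:
(i) there is `G ∈ L^∞` with `∫ F (L u) dμ = ∫ G u dμ` for all `u ∈ D(L)`;
(ii) `(S_t F − F)/t` converges in the topology `C(L^∞,L^1)` as `t → 0⁺`;
and in that case the limit in (ii) equals the `G` of (i).  (Condition (i) for a given `G`
is expressed as: for all `u, v` with `(T_t u − u)/t → v` in `L^1`-norm,
`∫ F v dμ = ∫ G u dμ`; condition (ii) for a given `G` as: for every norm-compact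
`K ⊆ L^1`, `p_K((S_t F − F)/t − G) → 0` as `t → 0⁺`.) -/
theorem adjoint_generator_eq_adjoint_of_generator
    {E : Type*} [TopologicalSpace E] [PolishSpace E] [MeasurableSpace E] [BorelSpace E]
    (μ : Measure E) [SigmaFinite μ]
    (T : ℝ → (Lp ℝ 1 μ →L[ℝ] Lp ℝ 1 μ))
    (hT0 : ∀ u, T 0 u = u)
    (hTsemi : ∀ s, 0 ≤ s → ∀ t, 0 ≤ t → ∀ u, T (s + t) u = T s (T t u))
    (hTcont : ∀ u, ContinuousOn (fun t => T t u) (Set.Ici 0))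
    (S : ℝ → (Lp ℝ ⊤ μ →ₗ[ℝ] Lp ℝ ⊤ μ))
    (hS : ∀ t, 0 ≤ t → ∀ (F : Lp ℝ ⊤ μ) (u : Lp ℝ 1 μ),
      ∫ x, (S t F) x * u x ∂μ = ∫ x, F x * (T t u) x ∂μ)
    (F : Lp ℝ ⊤ μ) :
    -- (i) ⇔ (ii)
    ((∃ G : Lp ℝ ⊤ μ, ∀ u v : Lp ℝ 1 μ,
        Tendsto (fun t : ℝ => ‖t⁻¹ • (T t u - u) - v‖) (nhdsWithin 0 (Set.Ioi 0)) (nhds 0) →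
        ∫ x, F x * v x ∂μ = ∫ x, G x * u x ∂μ) ↔
      (∃ G : Lp ℝ ⊤ μ, ∀ K : Set (Lp ℝ 1 μ), IsCompact K →
        Tendsto (fun t : ℝ => pK μ K (t⁻¹ • (S t F - F) - G))
          (nhdsWithin 0 (Set.Ioi 0)) (nhds 0))) ∧
    -- and in that case the limit in (ii) equals the function `G` of (i)
    (∀ G : Lp ℝ ⊤ μ,
      (∀ u v : Lp ℝ 1 μ,
        Tendsto (fun t : ℝ => ‖t⁻¹ • (T t u - u) - v‖) (nhdsWithin 0 (Set.Ioi 0)) (nhds 0) →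
        ∫ x, F x * v x ∂μ = ∫ x, G x * u x ∂μ) →
      (∀ K : Set (Lp ℝ 1 μ), IsCompact K →
        Tendsto (fun t : ℝ => pK μ K (t⁻¹ • (S t F - F) - G))
          (nhdsWithin 0 (Set.Ioi 0)) (nhds 0))) :=
  adjoint_generator_eq_adjoint_of_generator_general μ T hT0 hTsemi hTcont S hS F
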